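/- Assume L is a domain, ℰ is a paving on E, and ν is an L-valued maxitive measure on ℰ. Then the map c* : x ↦ ν*({x}) is upper semicontinuous on E: for every t ∈ L, the set {x ∈ E : t ≫ c*(x)} is open in the topology generated by ℰ. -/
import Mathlib


open Set

variable {E L : Type*}

/-- A prepaving on `E`: a collection of subsets containing `∅` and closed under
(binary, hence finite) unions. -/
def IsPrepaving (ℰ : Set (Set E)) : Prop :=
  ∅ ∈ ℰ ∧ ∀ A ∈ ℰ, ∀ B ∈ ℰ, A ∪ B ∈ ℰ

/-- A paving on `E`: a prepaving covering `E` such that, for every `x`, the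
collection `{G ∈ ℰ : x ∈ G}` is nonempty and filtered under inclusion. -/
def IsPaving (ℰ : Set (Set E)) : Prop :=
  IsPrepaving ℰ ∧ ∀ x : E, (∃ G ∈ ℰ, x ∈ G) ∧
    ∀ G ∈ ℰ, x ∈ G → ∀ G' ∈ ℰ, x ∈ G' → ∃ H ∈ ℰ, x ∈ H ∧ H ⊆ G ∧ H ⊆ G'

/-- An ideal of the prepaving `ℰ`: a nonempty subset of `ℰ` closed under finite
unions and downward closed (within `ℰ`). -/
def IsIdealOf (ℰ 𝓘 : Set (Set E)) : Prop :=
  𝓘.Nonempty ∧ 𝓘 ⊆ ℰ ∧ (∀ A ∈ 𝓘, ∀ B ∈ 𝓘, A ∪ B ∈ 𝓘) ∧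
    ∀ A ∈ ℰ, ∀ B ∈ 𝓘, A ⊆ B → A ∈ 𝓘

/-- A filter of a poset: a nonempty, (downward) filtered, upward-closed subset. -/
def IsFilterSet [PartialOrder L] (F : Set L) : Prop :=
  F.Nonempty ∧ (∀ x ∈ F, ∀ y ∈ F, ∃ z ∈ F, z ≤ x ∧ z ≤ y) ∧
    ∀ x ∈ F, ∀ y : L, x ≤ y → y ∈ F

/-- `y` is way-above `x`: for every filter `F` possessing an infimum `a`,
`a ≤ x` implies `y ∈ F`. -/
def WayAbove [PartialOrder L] (y x : L) : Prop :=
  ∀ F : Set L, IsFilterSet F → ∀ a : L, IsGLB F a → a ≤ x → y ∈ F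

/-- A continuous poset: for every `x`, `↟x = {y : y ≫ x}` is a filter with
infimum `x`. -/
def ContinuousPoset (L : Type*) [PartialOrder L] : Prop :=
  ∀ x : L, IsFilterSet {y : L | WayAbove y x} ∧ IsGLB {y : L | WayAbove y x} x

/-- A domain: a continuous poset in which every filter has an infimum. -/
def DomainPoset (L : Type*) [PartialOrder L] : Prop :=
  ContinuousPoset L ∧ ∀ F : Set L, IsFilterSet F → ∃ a : L, IsGLB F a

/-- A locally complete poset: every upper-bounded subset has a supremum. -/
def LocallyComplete (L : Type*) [PartialOrder L] : Prop :=
  ∀ S : Set L, BddAbove S → ∃ a : L, IsLUB S a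

/-- A maxitive measure on `ℰ`: `ν ∅ = 0`, and for every finite family of
elements of `ℰ` whose union lies in `ℰ`, the supremum of the values exists and
equals the value of the union. -/
def IsMaxitive [PartialOrder L] [OrderBot L] (ℰ : Set (Set E)) (ν : Set E → L) : Prop :=
  ν ∅ = ⊥ ∧ ∀ S : Finset (Set E), (∀ G ∈ S, G ∈ ℰ) → ⋃₀ (S : Set (Set E)) ∈ ℰ →
    IsLUB (ν '' (S : Set (Set E))) (ν (⋃₀ (S : Set (Set E))))

/-- A completely maxitive measure on `ℰ`: as above, but for arbitrary families. -/
def IsCompletelyMaxitive [PartialOrder L] [OrderBot L] (ℰ : Set (Set E)) (ν : Set E → L) : Prop :=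
  ν ∅ = ⊥ ∧ ∀ 𝒢 : Set (Set E), 𝒢 ⊆ ℰ → ⋃₀ 𝒢 ∈ ℰ →
    IsLUB (ν '' 𝒢) (ν (⋃₀ 𝒢))

open Classical in
/-- The infimum of `S` when it exists, `⊥` otherwise. -/
noncomputable def pInf [PartialOrder L] [OrderBot L] (S : Set L) : L :=
  if h : ∃ a : L, IsGLB S a then h.choose else ⊥

open Classical in
/-- The supremum of `S` when it exists, `⊥` otherwise. -/
noncomputable def pSup [PartialOrder L] [OrderBot L] (S : Set L) : L :=
  if h : ∃ a : L, IsLUB S a then h.choose else ⊥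

/-- `ℰ*`: the collection of subsets `A` of `E` such that `{G ∈ ℰ : A ⊆ G}` is
nonempty and filtered under inclusion. -/
def EStar (ℰ : Set (Set E)) : Set (Set E) :=
  {A | (∃ G ∈ ℰ, A ⊆ G) ∧
    ∀ G ∈ ℰ, A ⊆ G → ∀ G' ∈ ℰ, A ⊆ G' → ∃ H ∈ ℰ, A ⊆ H ∧ H ⊆ G ∧ H ⊆ G'}

/-- The extension `ν*` of `ν`: `ν*(A) = ⋀ {ν G : G ∈ ℰ, A ⊆ G}`. -/
noncomputable def nuStar [PartialOrder L] [OrderBot L] (ℰ : Set (Set E))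
    (ν : Set E → L) (A : Set E) : L :=
  pInf (ν '' {G ∈ ℰ | A ⊆ G})

/-- `𝒦`: the compact subsets of `E` for the topology generated by `ℰ`. -/
def Kpt (ℰ : Set (Set E)) : Set (Set E) :=
  {K | @IsCompact E (TopologicalSpace.generateFrom ℰ) K}

/-- `ℱ = {F ⊆ E : F ∈ ℰ* and Fᶜ ∈ ℰ}`. -/
def Fcl (ℰ : Set (Set E)) : Set (Set E) :=
  {F | F ∈ EStar ℰ ∧ Fᶜ ∈ ℰ}

/-- `ℋ = 𝒦 ∩ ℱ`. -/
def Hcf (ℰ : Set (Set E)) : Set (Set E) := Kpt ℰ ∩ Fcl ℰ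

/-- The regular part `⌊ν⌋(G) = ⊕ {ν*(K) : K ∈ 𝒦, K ⊆ G}`. -/
noncomputable def regPart [PartialOrder L] [OrderBot L] (ℰ : Set (Set E))
    (ν : Set E → L) (G : Set E) : L :=
  pSup (nuStar ℰ ν '' {K ∈ Kpt ℰ | K ⊆ G})

/-- `r` is the residual part of `ν`: the smallest maxitive measure such that
`ν = ⌊ν⌋ ⊕ r` on `ℰ`. -/
def IsResidualPart [Lattice L] [OrderBot L] (ℰ : Set (Set E)) (ν r : Set E → L) : Prop :=
  IsMaxitive ℰ r ∧ (∀ G ∈ ℰ, ν G = regPart ℰ ν G ⊔ r G) ∧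
    ∀ τ : Set E → L, IsMaxitive ℰ τ → (∀ G ∈ ℰ, ν G = regPart ℰ ν G ⊔ τ G) →
      ∀ G ∈ ℰ, r G ≤ τ G
section Aux

variable [PartialOrder L]

lemma wayAbove_le {y x : L} (h : WayAbove y x) : x ≤ y := by
  have hf : IsFilterSet (Ici x) :=
    ⟨⟨x, le_rfl⟩, fun a ha b hb => ⟨x, le_rfl, ha, hb⟩, fun a ha b hab => le_trans ha hab⟩
  exact h (Ici x) hf x isGLB_Ici le_rfl

lemma wayAbove_mono_left {y y' x : L} (h : WayAbove y x) (hyy : y ≤ y') : WayAbove y' x :=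
  fun F hF a ha hax => hF.2.2 y (h F hF a ha hax) y' hyy

lemma wayAbove_anti_right {y x x' : L} (h : WayAbove y x) (hx : x' ≤ x) : WayAbove y x' :=
  fun F hF a ha hax => h F hF a ha (le_trans hax hx)

lemma wayAbove_interpolate (hL : DomainPoset L) {t c : L} (h : WayAbove t c) :
    ∃ s : L, WayAbove t s ∧ WayAbove s c := by
  set F : Set L := {a | ∃ b, WayAbove a b ∧ WayAbove b c} with hFdef
  have hsub : ∀ b : L, WayAbove b c → {a : L | WayAbove a b} ⊆ F :=
    fun b hb a ha => ⟨b, ha, hb⟩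
  have hFfil : IsFilterSet F := by
    refine ⟨?_, ?_, ?_⟩
    · obtain ⟨b, hb⟩ := (hL.1 c).1.1
      obtain ⟨a, ha⟩ := (hL.1 b).1.1
      exact ⟨a, b, ha, hb⟩
    · rintro a₁ ⟨b₁, ha₁, hb₁⟩ a₂ ⟨b₂, ha₂, hb₂⟩
      obtain ⟨b, hb, hb1, hb2⟩ := (hL.1 c).1.2.1 b₁ hb₁ b₂ hb₂
      have ha₁b : WayAbove a₁ b := wayAbove_anti_right ha₁ hb1
      have ha₂b : WayAbove a₂ b := wayAbove_anti_right ha₂ hb2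
      obtain ⟨a, ha, h1, h2⟩ := (hL.1 b).1.2.1 a₁ ha₁b a₂ ha₂b
      exact ⟨a, ⟨b, ha, hb⟩, h1, h2⟩
    · rintro a ⟨b, ha, hb⟩ a' haa'
      exact ⟨b, wayAbove_mono_left ha haa', hb⟩
  have hglb : IsGLB F c := by
    constructor
    · rintro a ⟨b, ha, hb⟩
      exact le_trans (wayAbove_le hb) (wayAbove_le ha)
    · intro d hd
      have : d ∈ lowerBounds {b : L | WayAbove b c} := by
        intro b hb
        exact (hL.1 b).2.2 fun a ha => hd (hsub b hb ha)
      exact (hL.1 c).2.2 this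
  obtain ⟨s, hts, hsc⟩ := h F hFfil c hglb le_rfl
  exact ⟨s, hts, hsc⟩

end Aux

lemma nu_mono [PartialOrder L] [OrderBot L] {ℰ : Set (Set E)} {ν : Set E → L}
    (hν : IsMaxitive ℰ ν) {A B : Set E} (hA : A ∈ ℰ) (hB : B ∈ ℰ) (hAB : A ⊆ B) :
    ν A ≤ ν B := by
  classical
  have hS : ∀ G ∈ ({A, B} : Finset (Set E)), G ∈ ℰ := by
    intro G hG
    simp only [Finset.mem_insert, Finset.mem_singleton] at hG
    rcases hG with rfl | rfl <;> assumption
  have hcoe : (({A, B} : Finset (Set E)) : Set (Set E)) = {A, B} := by simp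
  have hU : ⋃₀ ((({A, B} : Finset (Set E)) : Set (Set E))) = B := by
    rw [hcoe, sUnion_pair, union_eq_self_of_subset_left hAB]
  have := hν.2 {A, B} hS (by rw [hU]; exact hB)
  rw [hU, hcoe] at this
  exact this.1 ⟨A, by simp, rfl⟩

lemma filterSet_aux [PartialOrder L] [OrderBot L]
    {ℰ : Set (Set E)} (hpav : IsPaving ℰ)
    {ν : Set E → L} (hν : IsMaxitive ℰ ν) (x : E) :
    IsFilterSet {u : L | ∃ G ∈ ℰ, x ∈ G ∧ ν G ≤ u} := by
  refine ⟨?_, ?_, ?_⟩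
  · obtain ⟨G, hG, hxG⟩ := (hpav.2 x).1
    exact ⟨ν G, G, hG, hxG, le_rfl⟩
  · rintro u ⟨G, hG, hxG, hGu⟩ v ⟨G', hG', hxG', hGv⟩
    obtain ⟨H, hH, hxH, h1, h2⟩ := (hpav.2 x).2 G hG hxG G' hG' hxG'
    exact ⟨ν H, ⟨H, hH, hxH, le_rfl⟩,
      le_trans (nu_mono hν hH hG h1) hGu, le_trans (nu_mono hν hH hG' h2) hGv⟩
  · rintro u ⟨G, hG, hxG, hGu⟩ v huv
    exact ⟨G, hG, hxG, le_trans hGu huv⟩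

lemma nuStar_singleton_isGLB [PartialOrder L] [OrderBot L]
    (hL : DomainPoset L) {ℰ : Set (Set E)} (hpav : IsPaving ℰ)
    {ν : Set E → L} (hν : IsMaxitive ℰ ν) (x : E) :
    IsGLB {u : L | ∃ G ∈ ℰ, x ∈ G ∧ ν G ≤ u} (nuStar ℰ ν {x}) := by
  set F : Set L := {u : L | ∃ G ∈ ℰ, x ∈ G ∧ ν G ≤ u} with hFdef
  have hFfil : IsFilterSet F := filterSet_aux hpav hν x
  obtain ⟨a, ha⟩ := hL.2 F hFfil
  have hset : IsGLB (ν '' {G ∈ ℰ | ({x} : Set E) ⊆ G}) a := by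
    constructor
    · rintro u ⟨G, ⟨hG, hxG⟩, rfl⟩
      exact ha.1 ⟨G, hG, by simpa using hxG, le_rfl⟩
    · intro d hd
      refine ha.2 ?_
      rintro u ⟨G, hG, hxG, hGu⟩
      exact le_trans (hd ⟨G, ⟨hG, by simpa using hxG⟩, rfl⟩) hGu
  have hex : ∃ b : L, IsGLB (ν '' {G ∈ ℰ | ({x} : Set E) ⊆ G}) b := ⟨a, hset⟩
  have : nuStar ℰ ν {x} = a := by
    rw [nuStar, pInf, dif_pos hex]
    exact hex.choose_spec.unique hset
  rw [this]
  exact ha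

/-- the map `c* : x ↦ ν*({x})` is upper semicontinuous: each set
`{x : t ≫ c*(x)}` is open for the topology generated by `ℰ`. -/
theorem cStar_upperSemicontinuous [PartialOrder L] [OrderBot L]
    (hL : DomainPoset L)
    (ℰ : Set (Set E)) (hpav : IsPaving ℰ)
    (ν : Set E → L) (hν : IsMaxitive ℰ ν) :
    ∀ t : L, @IsOpen E (TopologicalSpace.generateFrom ℰ)
      {x : E | WayAbove t (nuStar ℰ ν {x})} := by
  intro t
  set U : Set E := {x : E | WayAbove t (nuStar ℰ ν {x})} with hU
  have key : ∀ x ∈ U, ∃ G ∈ ℰ, x ∈ G ∧ G ⊆ U := by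
    intro x hx
    obtain ⟨s, hts, hsc⟩ := wayAbove_interpolate hL hx
    obtain ⟨G, hG, hxG, hGs⟩ :=
      hsc {u : L | ∃ G ∈ ℰ, x ∈ G ∧ ν G ≤ u} (filterSet_aux hpav hν x)
        _ (nuStar_singleton_isGLB hL hpav hν x) le_rfl
    refine ⟨G, hG, hxG, fun y hy => ?_⟩
    have hcy : nuStar ℰ ν {y} ≤ s :=
      le_trans ((nuStar_singleton_isGLB hL hpav hν y).1 ⟨G, hG, hy, le_rfl⟩) hGs
    exact wayAbove_anti_right hts hcy
  choose Gf hGf1 hGf2 hGf3 using key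
  have hUeq : U = ⋃₀ {G | ∃ x, ∃ hx : x ∈ U, G = Gf x hx} := by
    apply Set.eq_of_subset_of_subset
    · intro x hx
      exact ⟨Gf x hx, ⟨x, hx, rfl⟩, hGf2 x hx⟩
    · rintro y ⟨G, ⟨x, hx, rfl⟩, hyG⟩
      exact hGf3 x hx hyG
  rw [hUeq]
  exact TopologicalSpace.GenerateOpen.sUnion _
    (by rintro G ⟨x, hx, rfl⟩; exact TopologicalSpace.GenerateOpen.basic _ (hGf1 x hx))
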